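/- arXiv:2109.06915 — 3 statements merged into one kernel-verified Lean document; each statement's English description precedes it below -/
import Mathlib

section
/- Let q ≥ 1, let M be a row-stochastic q×q matrix, and let k ≥ 2 be an integer such that the matrix power M^k has rank one. Fix integers d ≥ 2 and ℓ ≥ 1, let μ be the broadcast process on the complete d-ary tree of depth ℓ with transition matrix M and an arbitrary root prior ν, and let S be a subset of the set L of leaves with |S| < 2^{⌊(ℓ−1)/(k−1)⌋}. Then the random vector X_S = (X_v)_{v∈S} is independent of the root value X_ρ under μ. -/
open Finset

/-- A finite rooted tree: a finite vertex set with a root, a parent map, and a depth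
function witnessing acyclicity (edges are directed from parent to child; the edge set is
`{(par v, v) : v ≠ root}`). -/
structure FiniteRootedTree where
  V : Type
  fintypeV : Fintype V
  decEqV : DecidableEq V
  root : V
  par : V → V
  depth : V → ℕ
  par_root : par root = root
  depth_root : depth root = 0
  depth_par : ∀ v, v ≠ root → depth v = depth (par v) + 1

attribute [instance] FiniteRootedTree.fintypeV FiniteRootedTree.decEqV

/-- `M` is a row-stochastic `q × q` matrix. -/
def RowStochastic {q : ℕ} (M : Matrix (Fin q) (Fin q) ℝ) : Prop :=
  (∀ i j, 0 ≤ M i j) ∧ ∀ i, ∑ j, M i j = 1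

/-- `ν` is a probability distribution on `Fin q`. -/
def IsProbVec {q : ℕ} (ν : Fin q → ℝ) : Prop :=
  (∀ c, 0 ≤ ν c) ∧ ∑ c, ν c = 1

/-- `M` is ergodic: some power of `M` has all entries strictly positive. -/
def IsErgodicMatrix {q : ℕ} (M : Matrix (Fin q) (Fin q) ℝ) : Prop :=
  ∃ n, 1 ≤ n ∧ ∀ i j, 0 < (M ^ n) i j

/-- The point mass at `c` as a distribution on `Fin q`. -/
def deltaPrior {q : ℕ} (c : Fin q) : Fin q → ℝ := fun c' => if c' = c then 1 else 0

/-- The probability that the broadcast process on `T` with transition matrix `M` and root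
prior `ν` assigns to the configuration `x : T.V → Fin q`, namely
`ν (x ρ) * ∏_{(u,v) ∈ E} M (x u) (x v)`. -/
noncomputable def bcast {q : ℕ} (M : Matrix (Fin q) (Fin q) ℝ) (T : FiniteRootedTree)
    (ν : Fin q → ℝ) (x : T.V → Fin q) : ℝ :=
  ν (x T.root) * ∏ v ∈ Finset.univ.filter (fun v => v ≠ T.root), M (x (T.par v)) (x v)

/-- The marginal probability that `X_u = c` under the broadcast process. -/
noncomputable def marg {q : ℕ} (M : Matrix (Fin q) (Fin q) ℝ) (T : FiniteRootedTree)
    (ν : Fin q → ℝ) (u : T.V) (c : Fin q) : ℝ :=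
  ∑ x : T.V → Fin q, bcast M T ν x * (if x u = c then 1 else 0)

/-- Vertices of the complete `d`-ary tree of depth `ℓ`: sequences of directions of
length at most `ℓ`. -/
abbrev daryV (d ℓ : ℕ) : Type := (i : Fin (ℓ + 1)) × (Fin (i : ℕ) → Fin d)

def daryRoot (d ℓ : ℕ) : daryV d ℓ := ⟨⟨0, Nat.succ_pos ℓ⟩, fun j => j.elim0⟩

def daryPar (d ℓ : ℕ) (v : daryV d ℓ) : daryV d ℓ :=
  if _h : (v.1 : ℕ) = 0 then v
  else ⟨⟨(v.1 : ℕ) - 1, lt_of_le_of_lt (Nat.sub_le _ _) v.1.isLt⟩,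
    fun j => v.2 ⟨(j : ℕ), lt_of_lt_of_le j.isLt (Nat.sub_le _ _)⟩⟩

theorem dary_par_root (d ℓ : ℕ) : daryPar d ℓ (daryRoot d ℓ) = daryRoot d ℓ :=
  dif_pos rfl

theorem dary_depth_par (d ℓ : ℕ) (v : daryV d ℓ) (hv : v ≠ daryRoot d ℓ) :
    (v.1 : ℕ) = ((daryPar d ℓ v).1 : ℕ) + 1 := by
  have h0 : (v.1 : ℕ) ≠ 0 := by
    obtain ⟨⟨i, hi⟩, f⟩ := v
    intro h
    apply hv
    have hi0 : i = 0 := h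
    subst hi0
    have hf : f = fun j => j.elim0 := funext fun j => j.elim0
    subst hf
    rfl
  unfold daryPar
  rw [dif_neg h0]
  show (v.1 : ℕ) = (v.1 : ℕ) - 1 + 1
  omega

/-- The complete `d`-ary tree of depth `ℓ` (every non-leaf vertex has exactly `d`
children and all leaves are at depth `ℓ`). -/
def Dary (d ℓ : ℕ) : FiniteRootedTree where
  V := daryV d ℓ
  fintypeV := inferInstance
  decEqV := inferInstance
  root := daryRoot d ℓ
  par := daryPar d ℓ
  depth := fun v => (v.1 : ℕ)
  par_root := dary_par_root d ℓ
  depth_root := rfl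
  depth_par := dary_depth_par d ℓ

/-- The set `L` of leaves of the complete `d`-ary tree of depth `ℓ` (vertices at depth `ℓ`). -/
abbrev DaryLeaves (d ℓ : ℕ) := {v : (Dary d ℓ).V // (Dary d ℓ).depth v = ℓ}

/-!
Given the root value `a`, the probability of the leaf observation `X_S = y` is computed upwards:
the message of a vertex is the product, over its children, of `M` applied to the child's
message. If a message equals `M^t φ`, then `k - t` edges higher it has passed through `M^k`,
which has rank one and fixes the constant vectors, so it has become constant. Hence a
non-constant message at the root needs two non-constant messages to meet at least once every
`k - 1` levels, and each meeting doubles the number of observed leaves below it: that number is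
then at least `2^⌊(ℓ-1)/(k-1)⌋`. When `|S|` is smaller the root message is a constant `κ`,
and `P(X_S = y, X_ρ = c) = ν c * κ = P(X_ρ = c) * P(X_S = y)`.
-/

open Matrix

theorem Matrix.exists_mulVec_eq_const_of_rank_eq_one {n K : Type*} [Fintype n] [Field K]
    {A : Matrix n n K} (h1 : A *ᵥ 1 = 1) (hA : A.rank = 1) (φ : n → K) :
    ∃ κ, A *ᵥ φ = Function.const n κ := by
  rcases isEmpty_or_nonempty n with hn | hn
  · exact ⟨0, Subsingleton.elim _ _⟩
  have hrange : K ∙ (1 : n → K) = LinearMap.range A.mulVecLin := by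
    refine Submodule.eq_of_le_of_finrank_le ?_ ?_
    · exact (Submodule.span_singleton_le_iff_mem _ _).2 ⟨1, h1⟩
    · rw [show Module.finrank K (LinearMap.range A.mulVecLin) = 1 from hA,
        finrank_span_singleton one_ne_zero]
  obtain ⟨κ, hκ⟩ := Submodule.mem_span_singleton.1 (hrange ▸ LinearMap.mem_range_self _ φ)
  exact ⟨κ, by rw [← Matrix.mulVecLin_apply, ← hκ]; exact funext fun _ => mul_one κ⟩

lemma Matrix.mulVec_const_of_mulVec_one {n K : Type*} [Fintype n] [CommSemiring K]
    {A : Matrix n n K} (h1 : A *ᵥ 1 = 1) (κ : K) :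
    A *ᵥ Function.const n κ = Function.const n κ := by
  have hκ : Function.const n κ = κ • (1 : n → K) := funext fun _ => (mul_one κ).symm
  rw [hκ, Matrix.mulVec_smul, h1]

@[to_additive]
lemma prod_pi_fin_succ {α β : Type*} [Fintype α] [CommMonoid β] {ℓ : ℕ}
    (f : (Fin (ℓ + 1) → α) → β) : ∏ s, f s = ∏ a, ∏ s, f (Fin.cons a s) := by
  rw [← (Fin.consEquiv fun _ => α).prod_comp, Fintype.prod_prod_type]
  rfl

lemma card_filter_pi_fin_succ {α : Type*} [Fintype α] {ℓ : ℕ} (p : (Fin (ℓ + 1) → α) → Prop)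
    [DecidablePred p] : #{s | p s} = ∑ a, #{s | p (Fin.cons a s)} := by
  simp only [Finset.card_filter]
  exact sum_pi_fin_succ _

lemma bcast_mul_apply_root {q : ℕ} (M : Matrix (Fin q) (Fin q) ℝ) (T : FiniteRootedTree)
    (ν g : Fin q → ℝ) (x : T.V → Fin q) :
    bcast M T ν x * g (x T.root) = bcast M T (ν * g) x := by
  simp only [bcast, Pi.mul_apply]
  ring

section DaryTree

variable {d ℓ : ℕ}

-- Typed as a vertex of `Dary d ℓ`, so that `daryLeaf s ∈ S` for `S : Finset (Dary d ℓ).V`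
-- finds its decidability instance.
def daryLeaf (s : Fin ℓ → Fin d) : (Dary d ℓ).V := ⟨Fin.last ℓ, s⟩

def daryCons (j : Fin d) (v : daryV d ℓ) : daryV d (ℓ + 1) := ⟨v.1.succ, Fin.cons j v.2⟩

lemma mk_zero_eq_daryRoot (h : 0 < ℓ + 1) (s : Fin 0 → Fin d) :
    (⟨⟨0, h⟩, s⟩ : daryV d ℓ) = daryRoot d ℓ :=
  Sigma.ext rfl (heq_of_eq (Subsingleton.elim _ _))

lemma eq_daryRoot_zero (v : daryV d 0) : v = daryRoot d 0 := by
  obtain ⟨⟨i, h⟩, s⟩ := v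
  obtain rfl : i = 0 := by omega
  exact mk_zero_eq_daryRoot h s

lemma exists_daryLeaf_eq {v : (Dary d ℓ).V} (hv : (Dary d ℓ).depth v = ℓ) :
    ∃ s, daryLeaf s = v := by
  obtain ⟨⟨i, hi⟩, s⟩ := v
  obtain rfl : i = ℓ := hv
  exact ⟨s, rfl⟩

lemma daryCons_daryLeaf (j : Fin d) (s : Fin ℓ → Fin d) :
    daryCons j (daryLeaf s) = daryLeaf (Fin.cons j s) := rfl

lemma daryCons_ne_daryRoot (j : Fin d) (v : daryV d ℓ) : daryCons j v ≠ daryRoot d (ℓ + 1) :=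
  fun h => Fin.succ_ne_zero v.1 (congrArg Sigma.fst h)

lemma daryPar_daryCons_daryRoot (j : Fin d) :
    daryPar d (ℓ + 1) (daryCons j (daryRoot d ℓ)) = daryRoot d (ℓ + 1) :=
  mk_zero_eq_daryRoot _ _

lemma daryPar_daryCons (j : Fin d) {v : daryV d ℓ} (hv : v ≠ daryRoot d ℓ) :
    daryPar d (ℓ + 1) (daryCons j v) = daryCons j (daryPar d ℓ v) := by
  obtain ⟨⟨_ | i, hi⟩, s⟩ := v
  · exact (hv (mk_zero_eq_daryRoot _ _)).elim
  · refine Sigma.ext rfl (heq_of_eq (funext fun t => ?_))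
    exact Fin.cases rfl (fun _ => rfl) t

def daryOptionEquiv : Option (Fin d × daryV d ℓ) ≃ daryV d (ℓ + 1) where
  toFun o := o.elim (daryRoot d (ℓ + 1)) fun p => daryCons p.1 p.2
  invFun
    | ⟨⟨0, _⟩, _⟩ => none
    | ⟨⟨i + 1, hi⟩, s⟩ => some (s 0, ⟨⟨i, by omega⟩, Fin.tail s⟩)
  left_inv
    | none => rfl
    | some (j, ⟨⟨i, hi⟩, s⟩) => by simp [daryCons]
  right_inv
    | ⟨⟨0, _⟩, s⟩ => (mk_zero_eq_daryRoot _ s).symm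
    | ⟨⟨i + 1, hi⟩, s⟩ => Sigma.ext rfl (heq_of_eq (Fin.cons_self_tail s))

lemma prod_filter_ne_daryRoot_succ (f : daryV d (ℓ + 1) → ℝ) :
    ∏ v ∈ univ.filter (fun v => v ≠ daryRoot d (ℓ + 1)), f v = ∏ j, ∏ v, f (daryCons j v) := by
  rw [Finset.prod_filter, ← daryOptionEquiv.prod_comp, Fintype.prod_option,
    ← Fintype.prod_prod_type']
  simp [daryOptionEquiv, daryCons_ne_daryRoot]

lemma sum_pi_daryV_succ {q : ℕ} (F : Fin q → (Fin d → daryV d ℓ → Fin q) → ℝ) :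
    ∑ x : daryV d (ℓ + 1) → Fin q, F (x (daryRoot d (ℓ + 1))) (fun j v => x (daryCons j v))
      = ∑ c, ∑ y, F c y := by
  rw [← Fintype.sum_prod_type', ← ((Equiv.arrowCongr daryOptionEquiv (Equiv.refl _)).symm.trans
    (Equiv.piOptionEquivProd.trans (Equiv.prodCongr (Equiv.refl _) (Equiv.curry _ _ _)))).sum_comp]
  rfl

end DaryTree

section Likelihood

variable {q d : ℕ} (M : Matrix (Fin q) (Fin q) ℝ)

/-- The upward message of leaf weights `w`: `leafLikelihood M w a` is the expectation of
`∏ s, w s (X_s)` over the leaves `s`, given `X_ρ = a`. -/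
noncomputable def leafLikelihood : {ℓ : ℕ} → ((Fin ℓ → Fin d) → Fin q → ℝ) → Fin q → ℝ
  | 0, w => w ![]
  | _ + 1, w => ∏ j, M *ᵥ leafLikelihood fun s => w (Fin.cons j s)

lemma bcast_dary {ℓ : ℕ} (ν : Fin q → ℝ) (x : daryV d ℓ → Fin q) :
    bcast M (Dary d ℓ) ν x = ν (x (daryRoot d ℓ)) *
      ∏ v ∈ univ.filter (fun v => v ≠ daryRoot d ℓ), M (x (daryPar d ℓ v)) (x v) :=
  rfl

lemma bcast_dary_succ {ℓ : ℕ} (ν : Fin q → ℝ) (x : daryV d (ℓ + 1) → Fin q) :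
    bcast M (Dary d (ℓ + 1)) ν x = ν (x (daryRoot d (ℓ + 1))) *
      ∏ j, bcast M (Dary d ℓ) (fun b => M (x (daryRoot d (ℓ + 1))) b)
        (fun v => x (daryCons j v)) := by
  rw [bcast_dary, prod_filter_ne_daryRoot_succ]
  congr 1
  refine Finset.prod_congr rfl fun j _ => Eq.trans ?_ (bcast_dary M _ _).symm
  rw [← Finset.mul_prod_erase _ _ (mem_univ (daryRoot d ℓ)), Finset.filter_ne',
    daryPar_daryCons_daryRoot]
  congr 1
  refine Finset.prod_congr rfl fun v hv => ?_
  rw [daryPar_daryCons j (Finset.ne_of_mem_erase hv)]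

theorem sum_bcast_mul_prod_daryLeaf :
    ∀ {ℓ : ℕ} (ν : Fin q → ℝ) (w : (Fin ℓ → Fin d) → Fin q → ℝ),
      ∑ x : daryV d ℓ → Fin q, bcast M (Dary d ℓ) ν x * ∏ s, w s (x (daryLeaf s))
        = ν ⬝ᵥ leafLikelihood M w
  | 0, ν, w => by
    have : Unique (daryV d 0) := ⟨⟨daryRoot d 0⟩, eq_daryRoot_zero⟩
    rw [← (Equiv.funUnique (daryV d 0) (Fin q)).symm.sum_comp]
    refine Finset.sum_congr rfl fun c _ => ?_
    have hE : univ.filter (fun v => v ≠ daryRoot d 0) = ∅ :=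
      Finset.filter_false_of_mem fun v _ => not_not.2 (eq_daryRoot_zero v)
    simp only [Equiv.funUnique_symm_apply, bcast_dary, hE, prod_empty, mul_one,
      leafLikelihood, Fintype.prod_unique, Subsingleton.elim default ![]]
    exact congrArg (ν c * w ![] ·) (uniqueElim_const c _)
  | ℓ + 1, ν, w => by
    simp_rw [bcast_dary_succ, prod_pi_fin_succ (ℓ := ℓ), ← daryCons_daryLeaf, mul_assoc,
      ← Finset.prod_mul_distrib]
    refine (sum_pi_daryV_succ fun c y => ν c * ∏ j, bcast M (Dary d ℓ) (fun b => M c b) (y j) *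
      ∏ s, w (Fin.cons j s) (y j (daryLeaf s))).trans (Finset.sum_congr rfl fun c _ => ?_)
    rw [← Finset.mul_sum, ← Fintype.prod_sum fun j (z : daryV d ℓ → Fin q) =>
      bcast M (Dary d ℓ) (fun b => M c b) z * ∏ s, w (Fin.cons j s) (z (daryLeaf s))]
    simp only [sum_bcast_mul_prod_daryLeaf, leafLikelihood, Finset.prod_apply]
    rfl

variable {M}

lemma leafLikelihood_one (h1 : M *ᵥ 1 = 1) :
    ∀ {ℓ : ℕ}, leafLikelihood M (fun (_ : Fin ℓ → Fin d) _ => (1 : ℝ)) = 1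
  | 0 => rfl
  | ℓ + 1 => by
    simp only [leafLikelihood, leafLikelihood_one h1, h1, Finset.prod_const_one]

lemma sum_bcast_mul_apply_root (h1 : M *ᵥ 1 = 1) {ℓ : ℕ} (ν g : Fin q → ℝ) :
    ∑ x : (Dary d ℓ).V → Fin q, bcast M (Dary d ℓ) ν x * g (x (Dary d ℓ).root) = ν ⬝ᵥ g :=
  calc ∑ x : (Dary d ℓ).V → Fin q, bcast M (Dary d ℓ) ν x * g (x (Dary d ℓ).root)
      = ∑ x : daryV d ℓ → Fin q, bcast M (Dary d ℓ) (ν * g) x *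
          ∏ s, (fun (_ : Fin ℓ → Fin d) _ => (1 : ℝ)) s (x (daryLeaf s)) :=
        Finset.sum_congr rfl fun x _ => by rw [bcast_mul_apply_root, prod_const_one, mul_one]
    _ = ν ⬝ᵥ g := by
        rw [sum_bcast_mul_prod_daryLeaf M (ν * g) fun _ _ => 1, leafLikelihood_one h1,
          dotProduct_one]
        rfl

end Likelihood

section Invariant

variable {q d : ℕ} {M : Matrix (Fin q) (Fin q) ℝ} {k : ℕ}

/-- The invariant of the upward induction, for a message `f` at height `h` with `N` informative
leaves below: `f` is constant, or `f = M^t φ` where `t < k` bounds the number of edges since two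
non-constant messages last met. -/
def ConstOrManyLeaves (M : Matrix (Fin q) (Fin q) ℝ) (k h N : ℕ) (f : Fin q → ℝ) : Prop :=
  (∃ κ, f = Function.const _ κ) ∨
    ∃ t < k, (∃ φ, f = (M ^ t) *ᵥ φ) ∧ 2 ^ ((h + k - 2 - t) / (k - 1)) ≤ N

lemma ConstOrManyLeaves.mulVec (h1 : M *ᵥ 1 = 1)
    (hMk : ∀ φ, ∃ κ, (M ^ k) *ᵥ φ = Function.const _ κ) {h N : ℕ} {f : Fin q → ℝ}
    (hf : ConstOrManyLeaves M k h N f) :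
    (∃ κ, M *ᵥ f = Function.const _ κ) ∨
      ∃ t < k - 1, (∃ φ, M *ᵥ f = (M ^ (t + 1)) *ᵥ φ) ∧ 2 ^ ((h + k - 2 - t) / (k - 1)) ≤ N := by
  rcases hf with ⟨κ, rfl⟩ | ⟨t, ht, ⟨φ, rfl⟩, hN⟩
  · exact Or.inl ⟨κ, mulVec_const_of_mulVec_one h1 κ⟩
  rw [mulVec_mulVec, ← pow_succ']
  by_cases htk : t + 1 = k
  · exact Or.inl (htk ▸ hMk φ)
  · exact Or.inr ⟨t, by omega, ⟨φ, rfl⟩, hN⟩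

lemma constOrManyLeaves_prod (hk : 2 ≤ k) {h : ℕ} {N : Fin d → ℕ} {g : Fin d → Fin q → ℝ}
    (hg : ∀ j, (∃ κ, g j = Function.const _ κ) ∨
      ∃ t < k - 1, (∃ φ, g j = (M ^ (t + 1)) *ᵥ φ) ∧ 2 ^ ((h + k - 2 - t) / (k - 1)) ≤ N j) :
    ConstOrManyLeaves M k (h + 1) (∑ j, N j) (∏ j, g j) := by
  by_cases hall : ∀ j, ∃ κ, g j = Function.const _ κ
  · choose κ hκ using hall
    exact Or.inl ⟨∏ j, κ j, funext fun a => by simp [Finset.prod_apply, hκ]⟩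
  push Not at hall
  obtain ⟨j₀, hj₀⟩ := hall
  obtain ⟨t₀, ht₀, ⟨φ₀, hφ₀⟩, hN₀⟩ := (hg j₀).resolve_left (not_exists.2 hj₀)
  by_cases hrest : ∀ j ≠ j₀, ∃ κ, g j = Function.const _ κ
  · have hconst : ∀ j, ∃ κ, j ≠ j₀ → g j = Function.const _ κ := fun j =>
      if hj : j = j₀ then ⟨0, fun hj' => (hj' hj).elim⟩ else (hrest j hj).imp fun _ h _ => h
    choose κ hκ using hconst
    refine Or.inr ⟨t₀ + 1, by omega, ⟨(∏ j ∈ univ.erase j₀, κ j) • φ₀, ?_⟩, ?_⟩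
    · rw [← Finset.mul_prod_erase univ g (mem_univ j₀), mulVec_smul, ← hφ₀]
      funext a
      simp only [Pi.mul_apply, Finset.prod_apply, Pi.smul_apply, smul_eq_mul]
      rw [Finset.prod_congr rfl fun j hj => congrFun (hκ j (Finset.ne_of_mem_erase hj)) a]
      simp only [Function.const_apply, mul_comm]
    · rw [show h + 1 + k - 2 - (t₀ + 1) = h + k - 2 - t₀ by omega]
      exact hN₀.trans (Finset.single_le_sum (fun j _ => Nat.zero_le (N j)) (mem_univ j₀))
  push Not at hrest
  obtain ⟨j₁, hne, hj₁⟩ := hrest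
  obtain ⟨t₁, ht₁, -, hN₁⟩ := (hg j₁).resolve_left (not_exists.2 hj₁)
  refine Or.inr ⟨0, by omega, ⟨∏ j, g j, by simp⟩, ?_⟩
  have hmono : ∀ t < k - 1, 2 ^ (h / (k - 1)) ≤ 2 ^ ((h + k - 2 - t) / (k - 1)) := fun t ht =>
    Nat.pow_le_pow_right two_pos (Nat.div_le_div_right (by omega))
  calc 2 ^ ((h + 1 + k - 2 - 0) / (k - 1))
      = 2 ^ (h / (k - 1)) + 2 ^ (h / (k - 1)) := by
        rw [show h + 1 + k - 2 - 0 = h + (k - 1) by omega, Nat.add_div_right h (by omega),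
          pow_succ, mul_two]
    _ ≤ N j₁ + N j₀ := add_le_add ((hmono t₁ ht₁).trans hN₁) ((hmono t₀ ht₀).trans hN₀)
    _ = ∑ j ∈ {j₁, j₀}, N j := (Finset.sum_pair hne).symm
    _ ≤ ∑ j, N j := Finset.sum_le_sum_of_subset (subset_univ _)

theorem constOrManyLeaves_leafLikelihood (hk : 2 ≤ k) (h1 : M *ᵥ 1 = 1)
    (hMk : ∀ φ, ∃ κ, (M ^ k) *ᵥ φ = Function.const _ κ) :
    ∀ {ℓ : ℕ} (w : (Fin ℓ → Fin d) → Fin q → ℝ),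
      ConstOrManyLeaves M k ℓ #{s | w s ≠ 1} (leafLikelihood M w)
  | 0, w => by
    by_cases hw : w ![] = 1
    · exact Or.inl ⟨1, hw⟩
    refine Or.inr ⟨0, by omega, ⟨w ![], by simp [leafLikelihood]⟩, ?_⟩
    rw [Nat.div_eq_of_lt (by omega), pow_zero, Nat.one_le_iff_ne_zero, Ne, Finset.card_eq_zero,
      Finset.filter_eq_empty_iff]
    exact fun h => h (mem_univ ![]) hw
  | ℓ + 1, w => by
    rw [card_filter_pi_fin_succ]
    exact constOrManyLeaves_prod hk fun j =>
      (constOrManyLeaves_leafLikelihood hk h1 hMk fun s => w (Fin.cons j s)).mulVec h1 hMk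

theorem exists_leafLikelihood_eq_const (hM : M ∈ rowStochastic ℝ (Fin q)) (hk : 2 ≤ k)
    (hrank : (M ^ k).rank = 1) {ℓ : ℕ} {w : (Fin ℓ → Fin d) → Fin q → ℝ}
    (hw : #{s | w s ≠ 1} < 2 ^ ((ℓ - 1) / (k - 1))) :
    ∃ κ, leafLikelihood M w = Function.const _ κ := by
  refine (constOrManyLeaves_leafLikelihood hk hM.2
    (fun φ => exists_mulVec_eq_const_of_rank_eq_one (pow_mem hM k).2 hrank φ) w).resolve_right ?_
  rintro ⟨t, ht, -, hN⟩
  have hexp : (ℓ - 1) / (k - 1) ≤ (ℓ + k - 2 - t) / (k - 1) := Nat.div_le_div_right (by omega)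
  exact (hN.trans_lt hw).not_ge (Nat.pow_le_pow_right two_pos hexp)

end Invariant

section Observation

variable {q d ℓ : ℕ}

def observationWeight (S : Finset (Dary d ℓ).V) (y : (Dary d ℓ).V → Fin q)
    (s : Fin ℓ → Fin d) (a : Fin q) : ℝ :=
  if daryLeaf s ∈ S then (if a = y (daryLeaf s) then 1 else 0) else 1

lemma card_observationWeight_ne_one_le (S : Finset (Dary d ℓ).V) (y : (Dary d ℓ).V → Fin q) :
    #{s | observationWeight S y s ≠ 1} ≤ #S := by
  refine Finset.card_le_card_of_injOn daryLeaf (fun s hs => ?_) fun s _ s' _ h => ?_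
  · by_contra hsS
    exact (Finset.mem_filter.1 hs).2 (funext fun a => if_neg hsS)
  · exact eq_of_heq (Sigma.mk.inj h).2

lemma ite_forall_eq_prod_observationWeight {S : Finset (Dary d ℓ).V}
    (hS : ∀ v ∈ S, (Dary d ℓ).depth v = ℓ) (x y : (Dary d ℓ).V → Fin q) :
    (if ∀ v ∈ S, x v = y v then (1 : ℝ) else 0)
      = ∏ s, observationWeight S y s (x (daryLeaf s)) := by
  by_cases h : ∀ v ∈ S, x v = y v
  · refine (if_pos h).trans (Finset.prod_eq_one fun s _ => ?_).symm
    by_cases hs : daryLeaf s ∈ S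
    · simp [observationWeight, hs, h _ hs]
    · simp [observationWeight, hs]
  · push Not at h
    obtain ⟨v, hv, hne⟩ := h
    obtain ⟨s, rfl⟩ := exists_daryLeaf_eq (hS v hv)
    refine (if_neg (not_forall₂_of_exists₂_not ⟨_, hv, hne⟩)).trans
      (Finset.prod_eq_zero (mem_univ s) ?_).symm
    simp [observationWeight, hv, hne]

lemma sum_bcast_mul_observation (M : Matrix (Fin q) (Fin q) ℝ) {S : Finset (Dary d ℓ).V}
    (hS : ∀ v ∈ S, (Dary d ℓ).depth v = ℓ) (y : (Dary d ℓ).V → Fin q) (ν g : Fin q → ℝ) :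
    ∑ x : (Dary d ℓ).V → Fin q, bcast M (Dary d ℓ) ν x *
        ((if ∀ v ∈ S, x v = y v then (1 : ℝ) else 0) * g (x (Dary d ℓ).root))
      = (ν * g) ⬝ᵥ leafLikelihood M (observationWeight S y) := by
  refine Eq.trans (Finset.sum_congr rfl fun x _ => ?_)
    (sum_bcast_mul_prod_daryLeaf M (ν * g) (observationWeight S y))
  rw [ite_forall_eq_prod_observationWeight hS x y, mul_comm (∏ s, _), ← mul_assoc,
    bcast_mul_apply_root]

end Observation

theorem stmt0_general (q : ℕ) (M : Matrix (Fin q) (Fin q) ℝ) (hM : RowStochastic M)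
    (k : ℕ) (hk : 2 ≤ k) (hrank : (M ^ k).rank = 1)
    (d ℓ : ℕ)
    (ν : Fin q → ℝ) (hν : IsProbVec ν)
    (S : Finset (Dary d ℓ).V) (hSleaf : ∀ v ∈ S, (Dary d ℓ).depth v = ℓ)
    (hScard : S.card < 2 ^ ((ℓ - 1) / (k - 1))) :
    ∀ (y : (Dary d ℓ).V → Fin q) (c : Fin q),
      (∑ x : (Dary d ℓ).V → Fin q,
          bcast M (Dary d ℓ) ν x *
            ((if ∀ v ∈ S, x v = y v then (1 : ℝ) else 0) *
              (if x (Dary d ℓ).root = c then 1 else 0)))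
        = (∑ x : (Dary d ℓ).V → Fin q,
            bcast M (Dary d ℓ) ν x * (if ∀ v ∈ S, x v = y v then (1 : ℝ) else 0)) *
          (∑ x : (Dary d ℓ).V → Fin q,
            bcast M (Dary d ℓ) ν x * (if x (Dary d ℓ).root = c then 1 else 0)) := by
  intro y c
  have hM' : M ∈ rowStochastic ℝ (Fin q) := mem_rowStochastic_iff_sum.2 hM
  obtain ⟨κ, hκ⟩ := exists_leafLikelihood_eq_const hM' hk hrank
    ((card_observationWeight_ne_one_le S y).trans_lt hScard)
  have hdot : ∀ g, (ν * g) ⬝ᵥ Function.const _ κ = κ * (ν ⬝ᵥ g) := fun g => by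
    simp only [dotProduct, Pi.mul_apply, Function.const_apply, Finset.mul_sum]
    exact Finset.sum_congr rfl fun _ _ => by ring
  have hν1 : ν ⬝ᵥ Function.const _ κ = κ := by simpa [dotProduct_one, hν.2] using hdot 1
  have hobs := sum_bcast_mul_observation M hSleaf y ν 1
  simp only [Pi.one_apply, mul_one] at hobs
  rw [sum_bcast_mul_observation M hSleaf y ν fun a => if a = c then 1 else 0, hobs,
    sum_bcast_mul_apply_root hM'.2 ν fun a => if a = c then 1 else 0, hκ, hdot, hν1]

/-- if `M^k` is rank one, then for any subset `S` of the leaves of the complete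
`d`-ary tree of depth `ℓ` with `|S| < 2^⌊(ℓ-1)/(k-1)⌋`, the vector `X_S` is independent of
the root value `X_ρ` under the broadcast process with any root prior `ν`. -/
theorem stmt0 (q : ℕ) (hq : 1 ≤ q) (M : Matrix (Fin q) (Fin q) ℝ) (hM : RowStochastic M)
    (k : ℕ) (hk : 2 ≤ k) (hrank : (M ^ k).rank = 1)
    (d ℓ : ℕ) (hd : 2 ≤ d) (hℓ : 1 ≤ ℓ)
    (ν : Fin q → ℝ) (hν : IsProbVec ν)
    (S : Finset (Dary d ℓ).V) (hSleaf : ∀ v ∈ S, (Dary d ℓ).depth v = ℓ)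
    (hScard : S.card < 2 ^ ((ℓ - 1) / (k - 1))) :
    ∀ (y : (Dary d ℓ).V → Fin q) (c : Fin q),
      (∑ x : (Dary d ℓ).V → Fin q,
          bcast M (Dary d ℓ) ν x *
            ((if ∀ v ∈ S, x v = y v then (1 : ℝ) else 0) *
              (if x (Dary d ℓ).root = c then 1 else 0)))
        = (∑ x : (Dary d ℓ).V → Fin q,
            bcast M (Dary d ℓ) ν x * (if ∀ v ∈ S, x v = y v then (1 : ℝ) else 0)) *
          (∑ x : (Dary d ℓ).V → Fin q,
            bcast M (Dary d ℓ) ν x * (if x (Dary d ℓ).root = c then 1 else 0)) :=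
  stmt0_general q M hM k hk hrank d ℓ ν hν S hSleaf hScard
end

section
/- Let k ≥ 2 and ℓ ≥ 1 be integers and let T be a finite rooted tree (with at least one vertex) in which every leaf is at depth exactly ℓ. Suppose T contains no directed path u_0, u_1, …, u_k (each u_{i+1} a child of u_i) such that each of the intermediate vertices u_1, …, u_{k−1} has exactly one child. Then T has at least 2^{⌊(ℓ−1)/(k−1)⌋} leaves. -/
open Finset

/-- A leaf of a finite rooted tree: a vertex with no children. -/
abbrev FiniteRootedTree.IsLeaf (T : FiniteRootedTree) (v : T.V) : Prop :=
  ∀ u, T.par u = v → u = v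

/-- The number of children of a vertex. -/
def FiniteRootedTree.numChildren (T : FiniteRootedTree) (w : T.V) : ℕ :=
  (Finset.univ.filter (fun u => T.par u = w ∧ u ≠ w)).card

namespace MyAux

open FiniteRootedTree

variable (T : FiniteRootedTree)

lemma ne_root_of_child {u v : T.V} (h : T.par u = v) (hne : u ≠ v) : u ≠ T.root := by
  rintro rfl
  rw [T.par_root] at h
  exact hne h

lemma depth_child {u v : T.V} (h : T.par u = v) (hne : u ≠ v) :
    T.depth u = T.depth v + 1 := by
  have := T.depth_par u (ne_root_of_child T h hne)
  rw [h] at this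
  exact this

lemma depth_iter : ∀ (i : ℕ) (v : T.V), i ≤ T.depth v →
    T.depth (T.par^[i] v) + i = T.depth v := by
  intro i
  induction i with
  | zero => simp
  | succ n ih =>
    intro v hv
    rw [Function.iterate_succ_apply']
    have hxd : T.depth (T.par^[n] v) + n = T.depth v := ih v (by omega)
    have hxr : T.par^[n] v ≠ T.root := by
      intro h
      rw [h, T.depth_root] at hxd
      omega
    have := T.depth_par _ hxr
    omega

lemma depth_lt_card (v : T.V) : T.depth v < Fintype.card T.V := by
  have hinj : Function.Injective (fun i : Fin (T.depth v + 1) => T.par^[i.1] v) := by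
    intro a b hab
    have da := depth_iter T a.1 v (Nat.lt_succ_iff.mp a.2)
    have db := depth_iter T b.1 v (Nat.lt_succ_iff.mp b.2)
    simp only at hab
    rw [hab] at da
    exact Fin.ext (by omega)
  have := Fintype.card_le_of_injective _ hinj
  simpa using this

lemma exists_child_of_not_leaf {v : T.V} (hl : ¬ T.IsLeaf v) :
    ∃ u, T.par u = v ∧ u ≠ v := by
  simp only [FiniteRootedTree.IsLeaf, not_forall] at hl
  obtain ⟨u, hu, hne⟩ := hl
  exact ⟨u, hu, hne⟩

lemma leaf_numChildren {v : T.V} (h : T.IsLeaf v) : T.numChildren v = 0 := by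
  rw [FiniteRootedTree.numChildren, Finset.card_eq_zero, Finset.eq_empty_iff_forall_notMem]
  intro u hu
  rw [Finset.mem_filter] at hu
  exact hu.2.2 (h u hu.2.1)

lemma exists_child_of_numChildren_one {v : T.V} (h : T.numChildren v = 1) :
    ∃ u, T.par u = v ∧ u ≠ v := by
  have : (Finset.univ.filter (fun u => T.par u = v ∧ u ≠ v)).Nonempty := by
    rw [← Finset.card_pos, ← FiniteRootedTree.numChildren, h]
    omega
  obtain ⟨u, hu⟩ := this
  rw [Finset.mem_filter] at hu
  exact ⟨u, hu.2.1, hu.2.2⟩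

lemma exists_leaf_desc (v : T.V) :
    ∃ w m, T.IsLeaf w ∧ T.par^[m] w = v ∧ T.depth w = T.depth v + m := by
  suffices h : ∀ n v, Fintype.card T.V ≤ T.depth v + n →
      ∃ w m, T.IsLeaf w ∧ T.par^[m] w = v ∧ T.depth w = T.depth v + m by
    exact h (Fintype.card T.V) v (by omega)
  intro n
  induction n with
  | zero =>
    intro v hv
    exact absurd (depth_lt_card T v) (by omega)
  | succ n ih =>
    intro v hv
    by_cases hl : T.IsLeaf v
    · exact ⟨v, 0, hl, rfl, by simp⟩
    · obtain ⟨u, hu, hne⟩ := exists_child_of_not_leaf T hl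
      have hd := depth_child T hu hne
      obtain ⟨w, m, h1, h2, h3⟩ := ih u (by omega)
      exact ⟨w, m + 1, h1, by rw [Function.iterate_succ_apply', h2, hu],
        by rw [h3, hd]; omega⟩

section WithLeaves

variable (ℓ : ℕ) (hleaf : ∀ v, T.IsLeaf v → T.depth v = ℓ)

include hleaf

lemma depth_le (v : T.V) : T.depth v ≤ ℓ := by
  obtain ⟨w, m, h1, _, h3⟩ := exists_leaf_desc T v
  have := hleaf w h1
  omega

lemma leaf_of_depth {v : T.V} (h : T.depth v = ℓ) : T.IsLeaf v := by
  obtain ⟨w, m, h1, h2, h3⟩ := exists_leaf_desc T v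
  have := hleaf w h1
  have hm : m = 0 := by omega
  rw [hm] at h2
  simp at h2
  rwa [← h2]

end WithLeaves

/-- The set of leaf descendants of `v` (for a tree whose leaves are at depth `ℓ`). -/
def leafSet (ℓ : ℕ) (v : T.V) : Finset T.V :=
  Finset.univ.filter (fun w => T.IsLeaf w ∧ T.par^[ℓ - T.depth v] w = v)

lemma mem_leafSet {ℓ : ℕ} {v w : T.V} :
    w ∈ leafSet T ℓ v ↔ T.IsLeaf w ∧ T.par^[ℓ - T.depth v] w = v := by
  simp [leafSet]

lemma leafSet_subset {ℓ i : ℕ} {z y : T.V} (hz : T.par^[i] z = y)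
    (hdz : T.depth z = T.depth y + i) (hle : T.depth z ≤ ℓ) :
    leafSet T ℓ z ⊆ leafSet T ℓ y := by
  intro w hw
  rw [mem_leafSet] at hw ⊢
  refine ⟨hw.1, ?_⟩
  have harith : ℓ - T.depth y = i + (ℓ - T.depth z) := by omega
  rw [harith, Function.iterate_add_apply, hw.2, hz]

lemma leafSet_nonempty (ℓ : ℕ) (hleaf : ∀ v, T.IsLeaf v → T.depth v = ℓ) (v : T.V) :
    (leafSet T ℓ v).Nonempty := by
  obtain ⟨w, m, h1, h2, h3⟩ := exists_leaf_desc T v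
  have hw := hleaf w h1
  have hm : m = ℓ - T.depth v := by omega
  exact ⟨w, mem_leafSet T |>.mpr ⟨h1, by rw [← hm]; exact h2⟩⟩

section Main

variable (k ℓ : ℕ) (hk : 2 ≤ k)
  (hleaf : ∀ v, T.IsLeaf v → T.depth v = ℓ)
  (hnopath : ¬ ∃ u : ℕ → T.V,
      (∀ i < k, T.par (u (i + 1)) = u i ∧ u (i + 1) ≠ u i) ∧
      ∀ i, 1 ≤ i → i < k → T.numChildren (u i) = 1)

include hleaf in
/-- Greedy chain: from any `y`, following unique children, we reach a vertex with
`numChildren ≠ 1`. -/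
lemma chain : ∀ (s : ℕ) (y : T.V), T.depth y + s = ℓ →
    ∃ i z, i ≤ s ∧ T.par^[i] z = y ∧ T.depth z = T.depth y + i ∧
      T.numChildren z ≠ 1 ∧ ∀ j, 1 ≤ j → j ≤ i → T.numChildren (T.par^[j] z) = 1 := by
  intro s
  induction s with
  | zero =>
    intro y hy
    refine ⟨0, y, le_refl 0, rfl, by simp, ?_, by omega⟩
    rw [leaf_numChildren T (leaf_of_depth T ℓ hleaf hy)]
    omega
  | succ n ih =>
    intro y hy
    by_cases h1 : T.numChildren y = 1
    · obtain ⟨u, hu, hune⟩ := exists_child_of_numChildren_one T h1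
      have hdu := depth_child T hu hune
      obtain ⟨i, z, hi, hiter, hd, hnc, hch⟩ := ih u (by omega)
      refine ⟨i + 1, z, by omega, ?_, by omega, hnc, ?_⟩
      · rw [Function.iterate_succ_apply', hiter, hu]
      · intro j hj1 hji
        rcases Nat.lt_succ_iff_lt_or_eq.mp (Nat.lt_succ_of_le hji) with h | h
        · exact hch j hj1 (by omega)
        · rw [h, Function.iterate_succ_apply', hiter, hu]
          exact h1
    · exact ⟨0, y, Nat.zero_le _, rfl, by simp, h1, by omega⟩

include hnopath in
lemma chain_short : ∀ (z : T.V) (n : ℕ), n ≤ T.depth z →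
    (∀ j, 1 ≤ j → j < n → T.numChildren (T.par^[j] z) = 1) → n < k := by
  intro z n hn hch
  by_contra h
  push_neg at h
  apply hnopath
  refine ⟨fun t => T.par^[n - t] z, ?_, ?_⟩
  · intro t ht
    constructor
    · show T.par (T.par^[n - (t + 1)] z) = T.par^[n - t] z
      have he : n - t = (n - (t + 1)) + 1 := by omega
      rw [he, Function.iterate_succ_apply']
    · have d1 := depth_iter T (n - (t + 1)) z (by omega)
      have d2 := depth_iter T (n - t) z (by omega)
      intro heq
      simp only at heq
      rw [heq] at d1
      omega
  · intro t h1 h2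
    exact hch (n - t) (by omega) (by omega)

include hk hleaf hnopath in
lemma key : ∀ r v, T.depth v + r = ℓ → T.numChildren v ≠ 1 →
    2 ^ ((r + k - 2) / (k - 1)) ≤ (leafSet T ℓ v).card := by
  intro r
  induction r using Nat.strong_induction_on with
  | _ r IH =>
    intro v hdv hnc
    rcases Nat.eq_zero_or_pos r with hr0 | hrpos
    · subst hr0
      have : (0 + k - 2) / (k - 1) = 0 := Nat.div_eq_of_lt (by omega)
      rw [this, pow_zero, Nat.one_le_iff_ne_zero, ← Nat.pos_iff_ne_zero,
        Finset.card_pos]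
      exact leafSet_nonempty T ℓ hleaf v
    · -- v is not a leaf, so it has at least two children
      have hvnl : ¬ T.IsLeaf v := by
        intro hl
        have := hleaf v hl
        omega
      have hpos : 0 < T.numChildren v := by
        obtain ⟨u, hu, hune⟩ := exists_child_of_not_leaf T hvnl
        rw [FiniteRootedTree.numChildren, Finset.card_pos]
        exact ⟨u, Finset.mem_filter.mpr ⟨Finset.mem_univ u, hu, hune⟩⟩
      have h2c : 1 < (Finset.univ.filter (fun u => T.par u = v ∧ u ≠ v)).card := by
        rw [← FiniteRootedTree.numChildren]
        omega
      obtain ⟨y₁, hy₁, y₂, hy₂, hyne⟩ := Finset.one_lt_card.mp h2c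
      rw [Finset.mem_filter] at hy₁ hy₂
      set e := (r + k - 2) / (k - 1) with he
      have he1 : 1 ≤ e := by
        rw [he]
        rw [Nat.one_le_div_iff (by omega)]
        omega
      -- every child y of v has leafSet of size ≥ 2^(e-1)
      have hchild : ∀ y : T.V, T.par y = v → y ≠ v →
          2 ^ (e - 1) ≤ (leafSet T ℓ y).card := by
        intro y hpar hne
        have hdy := depth_child T hpar hne
        obtain ⟨i, z, hi, hiter, hdz, hncz, hch⟩ :=
          chain T ℓ hleaf (r - 1) y (by omega)
        -- i ≤ k - 2 : otherwise forbidden path starting at v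
        have hik : i + 1 < k := by
          apply chain_short T k hnopath z (i + 1) (by omega)
          intro j hj1 hji
          exact hch j hj1 (by omega)
        have hrec := IH (r - 1 - i) (by omega) z (by omega) hncz
        have hsub : leafSet T ℓ z ⊆ leafSet T ℓ y :=
          leafSet_subset T hiter hdz (by omega)
        have hmono : e - 1 ≤ (r - 1 - i + k - 2) / (k - 1) := by
          have h1 : (r + k - 2) ≤ (r - 1 - i + k - 2) + (k - 1) := by omega
          have h2 : (r + k - 2) / (k - 1) ≤ ((r - 1 - i + k - 2) + (k - 1)) / (k - 1) :=
            Nat.div_le_div_right h1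
          rw [Nat.add_div_right _ (by omega : 0 < k - 1)] at h2
          omega
        calc 2 ^ (e - 1) ≤ 2 ^ ((r - 1 - i + k - 2) / (k - 1)) :=
              Nat.pow_le_pow_right (by omega) hmono
          _ ≤ (leafSet T ℓ z).card := hrec
          _ ≤ (leafSet T ℓ y).card := Finset.card_le_card hsub
      -- combine the two children
      have hd1 := depth_child T hy₁.2.1 hy₁.2.2
      have hd2 := depth_child T hy₂.2.1 hy₂.2.2
      have hdisj : Disjoint (leafSet T ℓ y₁) (leafSet T ℓ y₂) := by
        rw [Finset.disjoint_left]
        intro w hw1 hw2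
        rw [mem_leafSet] at hw1 hw2
        apply hyne
        rw [← hw1.2, ← hw2.2, hd1, hd2]
      have hsub1 : leafSet T ℓ y₁ ⊆ leafSet T ℓ v :=
        leafSet_subset T (i := 1) (by simpa using hy₁.2.1) (by omega)
          (by have := depth_le T ℓ hleaf y₁; omega)
      have hsub2 : leafSet T ℓ y₂ ⊆ leafSet T ℓ v :=
        leafSet_subset T (i := 1) (by simpa using hy₂.2.1) (by omega)
          (by have := depth_le T ℓ hleaf y₂; omega)
      have hunion : (leafSet T ℓ y₁ ∪ leafSet T ℓ y₂).card ≤ (leafSet T ℓ v).card :=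
        Finset.card_le_card (Finset.union_subset hsub1 hsub2)
      rw [Finset.card_union_of_disjoint hdisj] at hunion
      have hc1 := hchild y₁ hy₁.2.1 hy₁.2.2
      have hc2 := hchild y₂ hy₂.2.1 hy₂.2.2
      have hpow : 2 ^ (e - 1) + 2 ^ (e - 1) = 2 ^ e := by
        rw [← Nat.two_mul, ← pow_succ']
        congr 1
        omega
      calc 2 ^ e = 2 ^ (e - 1) + 2 ^ (e - 1) := hpow.symm
        _ ≤ (leafSet T ℓ y₁).card + (leafSet T ℓ y₂).card := Nat.add_le_add hc1 hc2
        _ ≤ (leafSet T ℓ v).card := hunion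

end Main

end MyAux

/-- if every leaf of `T` is at depth exactly `ℓ` and `T` contains no directed
path `u_0, …, u_k` whose intermediate vertices `u_1, …, u_{k-1}` all have exactly one child,
then `T` has at least `2^⌊(ℓ-1)/(k-1)⌋` leaves. -/
theorem stmt5 (k ℓ : ℕ) (hk : 2 ≤ k) (hℓ : 1 ≤ ℓ) (T : FiniteRootedTree)
    (hleaf : ∀ v, T.IsLeaf v → T.depth v = ℓ)
    (hnopath : ¬ ∃ u : ℕ → T.V,
        (∀ i < k, T.par (u (i + 1)) = u i ∧ u (i + 1) ≠ u i) ∧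
        ∀ i, 1 ≤ i → i < k → T.numChildren (u i) = 1) :
    2 ^ ((ℓ - 1) / (k - 1)) ≤ (Finset.univ.filter (fun v => T.IsLeaf v)).card := by
  obtain ⟨i, z, hi, hiter, hdz, hncz, hch⟩ :=
    MyAux.chain T ℓ hleaf ℓ T.root (by rw [T.depth_root]; omega)
  rw [T.depth_root, Nat.zero_add] at hdz
  have hik : i < k := by
    apply MyAux.chain_short T k hnopath z i (by omega)
    intro j hj1 hji
    exact hch j hj1 (by omega)
  have hkey := MyAux.key T k ℓ hk hleaf hnopath (ℓ - i) z (by omega) hncz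
  have hsub : MyAux.leafSet T ℓ z ⊆ Finset.univ.filter (fun v => T.IsLeaf v) := by
    intro w hw
    rw [MyAux.mem_leafSet] at hw
    exact Finset.mem_filter.mpr ⟨Finset.mem_univ w, hw.1⟩
  have hmono : (ℓ - 1) / (k - 1) ≤ (ℓ - i + k - 2) / (k - 1) :=
    Nat.div_le_div_right (by omega)
  calc 2 ^ ((ℓ - 1) / (k - 1)) ≤ 2 ^ ((ℓ - i + k - 2) / (k - 1)) :=
        Nat.pow_le_pow_right (by omega) hmono
    _ ≤ (MyAux.leafSet T ℓ z).card := hkey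
    _ ≤ _ := Finset.card_le_card hsub
end

section
/- Let F be a field, let q ≥ 1, and let M be a q×q matrix over F with rank(M) ≥ 2 such that rank(M^k) ≤ 1 for some integer k ≥ 1. Then there exists a vector φ ∈ F^q with Mφ ≠ 0 and M²φ = 0. -/
lemma mulVecLin_pow' {F : Type} [Field F] {q : ℕ} (M : Matrix (Fin q) (Fin q) F) :
    ∀ n : ℕ, (M ^ n).mulVecLin = (M.mulVecLin : Module.End F (Fin q → F)) ^ n
  | 0 => by simp [Matrix.mulVecLin_one]; rfl
  | n + 1 => by
    rw [pow_succ, pow_succ, Matrix.mulVecLin_mul, mulVecLin_pow' M n]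
    rfl

/-- over any field, if `rank M ≥ 2` and `rank (M^k) ≤ 1` for some `k ≥ 1`, then
there is a vector `φ` with `Mφ ≠ 0` and `M²φ = 0`. -/
theorem stmt14 (F : Type) [Field F] (q : ℕ) (hq : 1 ≤ q)
    (M : Matrix (Fin q) (Fin q) F) (hrk : 2 ≤ M.rank)
    (k : ℕ) (hk : 1 ≤ k) (hrk1 : (M ^ k).rank ≤ 1) :
    ∃ φ : Fin q → F, M.mulVec φ ≠ 0 ∧ (M ^ 2).mulVec φ = 0 := by
  set f : Module.End F (Fin q → F) := M.mulVecLin with hf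
  by_contra h
  push_neg at h
  have hker : LinearMap.ker (f ^ 1) = LinearMap.ker (f ^ (1 : ℕ).succ) := by
    apply le_antisymm
    · intro x hx
      simp only [LinearMap.mem_ker, pow_one] at hx
      simp only [LinearMap.mem_ker, pow_succ, pow_one, Module.End.mul_apply, hx, map_zero]
    · intro x hx
      simp only [LinearMap.mem_ker, pow_one]
      by_contra hMx
      have hMx' : M.mulVec x ≠ 0 := hMx
      have h2 : (M ^ 2).mulVec x ≠ 0 := h x hMx'
      apply h2
      have : (M ^ 2).mulVec x = (f ^ 2) x := by
        rw [← mulVecLin_pow']; rfl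
      rw [this]
      simpa using hx
  have hkerk : LinearMap.ker (f ^ 1) = LinearMap.ker (f ^ k) := by
    have := Module.End.ker_pow_constant hker (k - 1)
    rwa [show 1 + (k - 1) = k from by omega] at this
  have hrn1 : M.rank + Module.finrank F (LinearMap.ker (f ^ 1)) = Module.finrank F (Fin q → F) := by
    rw [pow_one, hf, Matrix.rank]
    exact LinearMap.finrank_range_add_finrank_ker _
  have hrnk : (M ^ k).rank + Module.finrank F (LinearMap.ker (f ^ k))
      = Module.finrank F (Fin q → F) := by
    rw [Matrix.rank, mulVecLin_pow']
    exact LinearMap.finrank_range_add_finrank_ker _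
  rw [hkerk] at hrn1
  omega
end
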